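/- Let β > 1 and w ∈ Σ_β^n an admissible word. Then w can be uniquely decomposed as ε₁⋯ε_{k₁−1}w_{n₁} ε₁⋯ε_{k₂−1}w_{n₂} ⋯ ε₁⋯ε_{k_p−1}w_{n_p} ε₁⋯ε_{l−1}wₙ, where p ≥ 0, k₁,…,k_p, l ∈ ℕ with n = k₁ + ⋯ + k_p + l, nⱼ = k₁ + ⋯ + kⱼ, w_{nⱼ} < ε_{kⱼ} for all 1 ≤ j ≤ p, and wₙ ≤ ε_l. Moreover the blocks ε₁⋯ε_{kⱼ−1}w_{nⱼ} are all full, and if ε(1,β) is finite with length M then k₁,…,k_p, l ≤ M, and in the case l = M necessarily wₙ < ε_M. -/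

import Mathlib

/-!
While the digits of `x ∈ [0, 1)` agree with those of `1`, `T^i x = T^i 1 - β^i (1 - x) < T^i 1`,
so the next digit of `x` is at most the next digit of `1`. Cutting an admissible word at the first
place where it drops strictly below `ε(1, β)` and recursing gives the decomposition; it is unique
because a block `ε₁ ⋯ ε_{k-1} a` with `a < ε_k` must end exactly at that first drop.
Such a block is full: for `y ∈ [0, 1)`, read the block backwards from `y`; each partial value stays
below the matching `T^i 1 ≤ 1`, so the resulting point has the block as its first digits and is
sent to `y`. If `ε(1, β)` has length `M`, then `T^M 1 = 0`, so no admissible word agrees with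
`ε(1, β)` on `M` letters, which bounds every block length by `M`.
-/

noncomputable def Tb (β x : ℝ) : ℝ := β * x - ⌊β * x⌋

/-- The (i+1)-th digit of the β-expansion of x (0-indexed). -/
noncomputable def dig (β x : ℝ) (i : ℕ) : ℕ := (⌊β * (Tb β)^[i] x⌋).toNat

/-- w is an admissible word for base β. -/
def Adm (β : ℝ) (w : List ℕ) : Prop :=
  ∃ x, x ∈ Set.Ico (0:ℝ) 1 ∧ ∀ i (h : i < w.length), w[i] = dig β x i

/-- u is an admissible digit sequence for base β. -/
def AdmSeq (β : ℝ) (u : ℕ → ℕ) : Prop :=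
  ∃ x, x ∈ Set.Ico (0:ℝ) 1 ∧ ∀ i, u i = dig β x i

/-- The cylinder I(w) ⊆ [0,1). -/
def cyl (β : ℝ) (w : List ℕ) : Set ℝ :=
  {x | x ∈ Set.Ico (0:ℝ) 1 ∧ ∀ i (h : i < w.length), w[i] = dig β x i}

/-- w is a full word: T_β^{|w|} maps I(w) onto [0,1). -/
def Full (β : ℝ) (w : List ℕ) : Prop :=
  (Tb β)^[w.length] '' cyl β w = Set.Ico 0 1

/-- The β-expansion of 1 is finite with length M. -/
def FiniteLen (β : ℝ) (M : ℕ) : Prop :=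
  0 < M ∧ dig β 1 (M-1) ≠ 0 ∧ ∀ j, M ≤ j → dig β 1 j = 0

open Classical in
/-- The (i+1)-th digit of the modified β-expansion ε*(1,β) (0-indexed). -/
noncomputable def modExp (β : ℝ) (i : ℕ) : ℕ :=
  if h : ∃ M, FiniteLen β M then
    (if (i+1) % (Nat.find h) = 0 then dig β 1 (Nat.find h - 1) - 1
     else dig β 1 (i % Nat.find h))
  else dig β 1 i

/-- View a finite word as the sequence w0^∞. -/
def wordSeq (w : List ℕ) (i : ℕ) : ℕ := w.getD i 0

/-- Strict lexicographic order on sequences. -/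
def seqLt (u v : ℕ → ℕ) : Prop := ∃ k, (∀ i, i < k → u i = v i) ∧ u k < v k

/-- Strict lexicographic order on finite words (identified with w0^∞). -/
def wlt (u v : List ℕ) : Prop := seqLt (wordSeq u) (wordSeq v)

/-- Concatenation of a finite word with a sequence. -/
def catSeq (w : List ℕ) (u : ℕ → ℕ) (i : ℕ) : ℕ :=
  if h : i < w.length then w[i] else u (i - w.length)

open Classical in
/-- The largest position k ≤ s with ε_k ≠ 0 (greedy step). -/
noncomputable def greedyStep (β : ℝ) (s : ℕ) : ℕ :=
  Nat.findGreatest (fun k => 1 ≤ k ∧ dig β 1 (k-1) ≠ 0) s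

/-- τ_β(s): number of terms in the greedy representation of s by nonzero positions. -/
noncomputable def tau (β : ℝ) : ℕ → ℕ
  | 0 => 0
  | s + 1 => tau β (s - (greedyStep β (s+1) - 1)) + 1
decreasing_by omega

open Classical in
/-- r_s(β): maximal length of a string of 0's in ε₁*⋯ε_s*. -/
noncomputable def rrun (β : ℝ) (s : ℕ) : ℕ :=
  Nat.findGreatest (fun k => 1 ≤ k ∧ ∃ i, i + k ≤ s ∧ ∀ t, t < k → modExp β (i + t) = 0) s

/-- v is the immediate successor of u in the lexicographic order on Σ_β^n. -/
def SuccIn (β : ℝ) (n : ℕ) (u v : List ℕ) : Prop :=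
  u.length = n ∧ v.length = n ∧ Adm β u ∧ Adm β v ∧ wlt u v ∧
  ¬ ∃ z : List ℕ, z.length = n ∧ Adm β z ∧ wlt u z ∧ wlt z v

/-- There is a run of l consecutive non-full words in Σ_β^n. -/
def NonFullRun (β : ℝ) (n l : ℕ) : Prop :=
  ∃ f : ℕ → List ℕ,
    (∀ j, j < l → (f j).length = n ∧ Adm β (f j) ∧ ¬ Full β (f j)) ∧
    (∀ j, j + 1 < l → SuccIn β n (f j) (f (j+1)))

/-- There is a maximal run of l consecutive non-full words in Σ_β^n. -/
def MaxNonFullRun (β : ℝ) (n l : ℕ) : Prop :=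
  0 < l ∧ ∃ f : ℕ → List ℕ,
    (∀ j, j < l → (f j).length = n ∧ Adm β (f j) ∧ ¬ Full β (f j)) ∧
    (∀ j, j + 1 < l → SuccIn β n (f j) (f (j+1))) ∧
    (∀ u, SuccIn β n u (f 0) → Full β u) ∧
    (∀ u, SuccIn β n (f (l-1)) u → Full β u)

/-- There is a maximal run of l consecutive full words in Σ_β^n. -/
def MaxFullRun (β : ℝ) (n l : ℕ) : Prop :=
  0 < l ∧ ∃ f : ℕ → List ℕ,
    (∀ j, j < l → (f j).length = n ∧ Adm β (f j) ∧ Full β (f j)) ∧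
    (∀ j, j + 1 < l → SuccIn β n (f j) (f (j+1))) ∧
    (∀ u, SuccIn β n u (f 0) → ¬ Full β u) ∧
    (∀ u, SuccIn β n (f (l-1)) u → ¬ Full β u)

/-- The canonical decomposition of an admissible word, as in the structure theorem:
p.1 is the list of block lengths k₁,…,k_p and p.2 is the final length l. -/
def Decomp (β : ℝ) (w : List ℕ) (p : List ℕ × ℕ) : Prop :=
  1 ≤ p.2 ∧ (∀ k ∈ p.1, 1 ≤ k) ∧ p.1.sum + p.2 = w.length ∧
  (∀ j, j < p.1.length →
    (∀ t, t < p.1.getD j 0 - 1 → w.getD ((p.1.take j).sum + t) 0 = dig β 1 t) ∧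
    w.getD ((p.1.take j).sum + (p.1.getD j 0 - 1)) 0 < dig β 1 (p.1.getD j 0 - 1)) ∧
  (∀ t, t < p.2 - 1 → w.getD (p.1.sum + t) 0 = dig β 1 t) ∧
  w.getD (p.1.sum + (p.2 - 1)) 0 ≤ dig β 1 (p.2 - 1)

section Digits

variable {β : ℝ}

lemma Tb_mem_Ico (x : ℝ) : Tb β x ∈ Set.Ico (0 : ℝ) 1 :=
  ⟨Int.fract_nonneg (β * x), Int.fract_lt_one (β * x)⟩

lemma iterate_Tb_mem_Ico {x : ℝ} (hx : x ∈ Set.Ico (0 : ℝ) 1) :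
    ∀ i, (Tb β)^[i] x ∈ Set.Ico (0 : ℝ) 1
  | 0 => hx
  | i + 1 => by rw [Function.iterate_succ_apply']; exact Tb_mem_Ico _

lemma iterate_Tb_one_mem_Icc : ∀ i, (Tb β)^[i] 1 ∈ Set.Icc (0 : ℝ) 1
  | 0 => by simp
  | i + 1 => by
    rw [Function.iterate_succ_apply']
    exact Set.Ico_subset_Icc_self (Tb_mem_Ico _)

lemma dig_shift (x : ℝ) (m t : ℕ) : dig β ((Tb β)^[m] x) t = dig β x (m + t) := by
  rw [dig, dig, ← Function.iterate_add_apply, add_comm]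

lemma dig_cast {x : ℝ} {i : ℕ} (hβ : 0 ≤ β) (h : 0 ≤ (Tb β)^[i] x) :
    (dig β x i : ℝ) = ⌊β * (Tb β)^[i] x⌋ := by
  rw [dig, ← Int.cast_natCast, Int.toNat_of_nonneg (Int.floor_nonneg.mpr (mul_nonneg hβ h))]

lemma iterate_Tb_succ {x : ℝ} {i : ℕ} (hβ : 0 ≤ β) (h : 0 ≤ (Tb β)^[i] x) :
    (Tb β)^[i + 1] x = β * (Tb β)^[i] x - dig β x i := by
  rw [Function.iterate_succ_apply', dig_cast hβ h]; rfl

lemma iterate_Tb_eq_of_dig_eq {x : ℝ} (hβ : 0 ≤ β) (hx : x ∈ Set.Ico (0 : ℝ) 1) {i : ℕ}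
    (h : ∀ t < i, dig β x t = dig β 1 t) :
    (Tb β)^[i] x = (Tb β)^[i] 1 + β ^ i * (x - 1) := by
  induction i with
  | zero => simp
  | succ i ih =>
    rw [iterate_Tb_succ hβ (iterate_Tb_mem_Ico hx i).1, iterate_Tb_succ hβ
      (iterate_Tb_one_mem_Icc i).1, ih fun t ht => h t (by omega), h i (by omega)]
    ring

lemma dig_le_dig_one_of_dig_eq {x : ℝ} (hβ : 0 < β) (hx : x ∈ Set.Ico (0 : ℝ) 1) {i : ℕ}
    (h : ∀ t < i, dig β x t = dig β 1 t) : dig β x i ≤ dig β 1 i := by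
  have hle : (Tb β)^[i] x ≤ (Tb β)^[i] 1 := by
    rw [iterate_Tb_eq_of_dig_eq hβ.le hx h]
    nlinarith [pow_pos hβ i, hx.2]
  exact Int.toNat_le_toNat (Int.floor_le_floor (mul_le_mul_of_nonneg_left hle hβ.le))

/-- Past the last nonzero digit the orbit of `1` only gets multiplied by `β`, yet stays below
`1`; hence it has reached `0`. -/
lemma iterate_Tb_one_eq_zero (hβ : 1 < β) {M : ℕ} (hM : FiniteLen β M) :
    (Tb β)^[M] 1 = 0 := by
  have hgrow : ∀ m, (Tb β)^[M + m] 1 = β ^ m * (Tb β)^[M] 1 := by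
    intro m
    induction m with
    | zero => simp
    | succ m ih =>
      rw [← add_assoc, iterate_Tb_succ (by linarith) (iterate_Tb_one_mem_Icc _).1, ih,
        hM.2.2 (M + m) (by omega)]
      push_cast; ring
  by_contra hne
  have hpos : 0 < (Tb β)^[M] 1 := lt_of_le_of_ne (iterate_Tb_one_mem_Icc M).1 (Ne.symm hne)
  obtain ⟨m, hm⟩ := pow_unbounded_of_one_lt (1 / (Tb β)^[M] 1) hβ
  have hlt : (Tb β)^[M + m] 1 < 1 := by
    obtain ⟨M', rfl⟩ : ∃ M', M = M' + 1 := ⟨M - 1, by have := hM.1; omega⟩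
    rw [add_right_comm, Function.iterate_succ_apply']
    exact (Tb_mem_Ico _).2
  rw [hgrow] at hlt
  rw [div_lt_iff₀ hpos] at hm
  linarith

lemma not_forall_dig_eq_of_finiteLen (hβ : 1 < β) {M : ℕ} (hM : FiniteLen β M) {x : ℝ}
    (hx : x ∈ Set.Ico (0 : ℝ) 1) : ¬ ∀ t < M, dig β x t = dig β 1 t := by
  intro h
  have := iterate_Tb_eq_of_dig_eq (by linarith) hx h
  rw [iterate_Tb_one_eq_zero hβ hM] at this
  nlinarith [(iterate_Tb_mem_Ico (β := β) hx M).1, pow_pos (by linarith : (0 : ℝ) < β) M, hx.2]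

end Digits

lemma List.getD_drop {α : Type*} (l : List α) (d : α) (m t : ℕ) :
    (l.drop m).getD t d = l.getD (m + t) d := by
  simp

section Words

variable {β : ℝ}

def AgreesUpTo (β : ℝ) (w : List ℕ) (m : ℕ) : Prop := ∀ t < m, w.getD t 0 = dig β 1 t

/-- `w` begins with a block `ε₁ ⋯ ε_{k-1} a` with `a < ε_k` (digits of `dig β 1` are
`0`-indexed, so `ε_k` is `dig β 1 (k - 1)`). -/
def IsBlock (β : ℝ) (w : List ℕ) (k : ℕ) : Prop :=
  1 ≤ k ∧ AgreesUpTo β w (k - 1) ∧ w.getD (k - 1) 0 < dig β 1 (k - 1)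

lemma AgreesUpTo.lt_of_isBlock {w : List ℕ} {m k : ℕ} (hm : AgreesUpTo β w m)
    (hk : IsBlock β w k) : m < k := by
  by_contra! h
  exact (hm (k - 1) (by have := hk.1; omega)).not_lt hk.2.2

lemma IsBlock.unique {w : List ℕ} {k k' : ℕ} (hk : IsBlock β w k) (hk' : IsBlock β w k') :
    k = k' := by
  have := hk.2.1.lt_of_isBlock hk'
  have := hk'.2.1.lt_of_isBlock hk
  have := hk.1
  have := hk'.1
  omega

lemma IsBlock.of_getD_eq {v w : List ℕ} {k : ℕ} (hw : IsBlock β w k)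
    (h : ∀ t < k, v.getD t 0 = w.getD t 0) : IsBlock β v k := by
  obtain ⟨hk, hagree, hlast⟩ := hw
  refine ⟨hk, fun t ht => (h t (by omega)).trans (hagree t ht), ?_⟩
  rwa [h (k - 1) (by omega)]

lemma IsBlock.le_of_finiteLen {w : List ℕ} {k M : ℕ} (hk : IsBlock β w k)
    (hM : FiniteLen β M) : k ≤ M := by
  by_contra! h
  have := hk.2.2
  rw [hM.2.2 (k - 1) (by omega)] at this
  omega

lemma Adm.exists_dig {w : List ℕ} (hw : Adm β w) :
    ∃ x ∈ Set.Ico (0 : ℝ) 1, ∀ i < w.length, w.getD i 0 = dig β x i := by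
  obtain ⟨x, hx, h⟩ := hw
  exact ⟨x, hx, fun i hi => (List.getD_eq_getElem w 0 hi).trans (h i hi)⟩

lemma Adm.drop {w : List ℕ} (hw : Adm β w) (m : ℕ) : Adm β (w.drop m) := by
  obtain ⟨x, hx, h⟩ := hw
  refine ⟨(Tb β)^[m] x, iterate_Tb_mem_Ico hx m, fun i hi => ?_⟩
  rw [List.getElem_drop, h _ (by simp at hi; omega), dig_shift]

lemma Adm.getD_le_of_agreesUpTo (hβ : 0 < β) {w : List ℕ} (hw : Adm β w) {i : ℕ}
    (hi : i < w.length) (hagree : AgreesUpTo β w i) : w.getD i 0 ≤ dig β 1 i := by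
  obtain ⟨x, hx, hdig⟩ := hw.exists_dig
  rw [hdig i hi]
  exact dig_le_dig_one_of_dig_eq hβ hx fun t ht => by rw [← hdig t (by omega), hagree t ht]

lemma Adm.not_agreesUpTo_of_finiteLen (hβ : 1 < β) {w : List ℕ} (hw : Adm β w) {M : ℕ}
    (hM : FiniteLen β M) (hMw : M ≤ w.length) : ¬ AgreesUpTo β w M := by
  intro hagree
  obtain ⟨x, hx, hdig⟩ := hw.exists_dig
  exact not_forall_dig_eq_of_finiteLen hβ hM hx fun t ht => by
    rw [← hdig t (by omega), hagree t ht]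

lemma Adm.exists_isBlock_of_not_agreesUpTo (hβ : 0 < β) {w : List ℕ} (hw : Adm β w) {m : ℕ}
    (hmw : m ≤ w.length) (h : ¬ AgreesUpTo β w m) : ∃ k ≤ m, IsBlock β w k := by
  classical
  have hex : ∃ i, i < m ∧ w.getD i 0 ≠ dig β 1 i := by
    simpa [AgreesUpTo] using h
  obtain ⟨him, hne⟩ := Nat.find_spec hex
  have hagree : AgreesUpTo β w (Nat.find hex) := fun t ht => by
    simpa [ht.trans him] using Nat.find_min hex ht
  refine ⟨Nat.find hex + 1, him, by omega, hagree, ?_⟩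
  exact (hw.getD_le_of_agreesUpTo hβ (by omega) hagree).lt_of_ne hne

end Words

section Fullness

variable {β : ℝ}

/-- `∑ uᵢ β^{-(i+1)} + β^{-|u|} y`: its expansion is `u` followed by that of `y` as long as all
partial values stay below `1`. -/
noncomputable def wordValue (β : ℝ) (u : List ℕ) (y : ℝ) : ℝ :=
  u.foldr (fun d z => (d + z) / β) y

lemma floor_mul_div_and_Tb_div (hβ : 0 < β) (d : ℕ) {z : ℝ} (hz : z ∈ Set.Ico (0 : ℝ) 1) :
    ⌊β * ((d + z) / β)⌋ = d ∧ Tb β ((d + z) / β) = z := by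
  have hmul : β * ((d + z) / β) = d + z := by field_simp
  have hfloor : ⌊β * ((d + z) / β)⌋ = d := by
    rw [hmul, Int.floor_eq_iff]; push_cast; constructor <;> linarith [hz.1, hz.2]
  refine ⟨hfloor, ?_⟩
  rw [Tb, hfloor, hmul]; push_cast; ring

lemma wordValue_mem_cyl (hβ : 0 < β) {y : ℝ} (hy : y ∈ Set.Ico (0 : ℝ) 1) :
    ∀ u : List ℕ, (∀ i < u.length, wordValue β (u.drop i) y < 1) →
      wordValue β u y ∈ cyl β u ∧ (Tb β)^[u.length] (wordValue β u y) = y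
  | [], _ => ⟨⟨hy, by simp⟩, rfl⟩
  | d :: u, h => by
    obtain ⟨⟨hz, hdig⟩, hiter⟩ :=
      wordValue_mem_cyl hβ hy u fun i hi => by simpa using h (i + 1) (by simpa using hi)
    obtain ⟨hfloor, hT⟩ := floor_mul_div_and_Tb_div hβ d hz
    have hx : wordValue β (d :: u) y = (d + wordValue β u y) / β := rfl
    refine ⟨⟨⟨by rw [hx]; have := hz.1; positivity, by simpa using h 0 (by simp)⟩, ?_⟩, ?_⟩
    · rintro (_ | i) hi
      · simp [hx, dig, hfloor]
      · have hshift := dig_shift (β := β) ((d + wordValue β u y) / β) 1 i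
        rw [Function.iterate_one, hT, Nat.add_comm 1 i] at hshift
        rw [List.getElem_cons_succ, hdig i (by simpa using hi), hshift, hx]
    · rw [List.length_cons, Function.iterate_succ_apply, hx, hT, hiter]

lemma wordValue_drop_lt_of_isBlock (hβ : 0 < β) {v : List ℕ} (hv : IsBlock β v v.length)
    {y : ℝ} (hy : y ∈ Set.Ico (0 : ℝ) 1) {i : ℕ} (hiv : i < v.length) :
    wordValue β (v.drop i) y < (Tb β)^[i] 1 := by
  refine Nat.decreasingInduction
    (motive := fun i _ => i < v.length → wordValue β (v.drop i) y < (Tb β)^[i] 1)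
    (fun i hi ih _ => ?_) (fun h => absurd h (lt_irrefl _)) hiv.le hiv
  have hcons : wordValue β (v.drop i) y = (v.getD i 0 + wordValue β (v.drop (i + 1)) y) / β := by
    rw [List.drop_eq_getElem_cons hi, List.getD_eq_getElem v 0 hi]; rfl
  have hstep : (Tb β)^[i + 1] 1 = β * (Tb β)^[i] 1 - dig β 1 i :=
    iterate_Tb_succ hβ.le (iterate_Tb_one_mem_Icc i).1
  have hsum : (v.getD i 0 : ℝ) + wordValue β (v.drop (i + 1)) y < β * (Tb β)^[i] 1 := by
    rcases (show i + 1 ≤ v.length from hi).eq_or_lt with hlast | hinner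
    · have hlt : v.getD i 0 + 1 ≤ dig β 1 i := by
        have := hv.2.2; rwa [← hlast, Nat.add_sub_cancel] at this
      have hlt' : (v.getD i 0 : ℝ) + 1 ≤ dig β 1 i := by exact_mod_cast hlt
      rw [hlast, List.drop_length]
      change (v.getD i 0 : ℝ) + y < _
      linarith [hy.2, (iterate_Tb_one_mem_Icc (β := β) (i + 1)).1]
    · rw [hv.2.1 i (by omega)]
      linarith [ih hinner]
  rw [hcons, div_lt_iff₀ hβ, mul_comm]
  exact hsum

theorem full_of_isBlock (hβ : 0 < β) {v : List ℕ} (hv : IsBlock β v v.length) : Full β v := by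
  refine Set.Subset.antisymm ?_ fun y hy => ?_
  · rintro _ ⟨x, hx, rfl⟩
    exact iterate_Tb_mem_Ico hx.1 _
  · obtain ⟨hmem, hiter⟩ := wordValue_mem_cyl hβ hy v fun i hi =>
      (wordValue_drop_lt_of_isBlock hβ hv hy hi).trans_le (iterate_Tb_one_mem_Icc i).2
    exact ⟨_, hmem, hiter⟩

end Fullness

section Decomposition

variable {β : ℝ}

lemma decomp_iff {w : List ℕ} {ks : List ℕ} {l : ℕ} :
    Decomp β w (ks, l) ↔ 1 ≤ l ∧ ks.sum + l = w.length ∧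
      (∀ j < ks.length, IsBlock β (w.drop (ks.take j).sum) (ks.getD j 0)) ∧
      AgreesUpTo β (w.drop ks.sum) (l - 1) ∧
      (w.drop ks.sum).getD (l - 1) 0 ≤ dig β 1 (l - 1) := by
  simp only [Decomp, IsBlock, AgreesUpTo, List.getD_drop]
  constructor
  · rintro ⟨hl, hpos, hlen, hblocks, htail, hlast⟩
    refine ⟨hl, hlen, fun j hj => ⟨?_, hblocks j hj⟩, htail, hlast⟩
    rw [List.getD_eq_getElem ks 0 hj]
    exact hpos _ (List.getElem_mem hj)
  · rintro ⟨hl, hlen, hblocks, htail, hlast⟩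
    refine ⟨hl, fun k hk => ?_, hlen, fun j hj => (hblocks j hj).2, htail, hlast⟩
    obtain ⟨j, hj, rfl⟩ := List.getElem_of_mem hk
    have := (hblocks j hj).1
    rwa [List.getD_eq_getElem ks 0 hj] at this

lemma decomp_nil_iff {w : List ℕ} {l : ℕ} :
    Decomp β w ([], l) ↔ 1 ≤ l ∧ l = w.length ∧ AgreesUpTo β w (l - 1) ∧
      w.getD (l - 1) 0 ≤ dig β 1 (l - 1) := by
  simp [decomp_iff]

lemma decomp_cons_iff {w : List ℕ} {k : ℕ} {ks : List ℕ} {l : ℕ} :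
    Decomp β w (k :: ks, l) ↔ IsBlock β w k ∧ Decomp β (w.drop k) (ks, l) := by
  simp only [decomp_iff, List.sum_cons, List.length_cons, Nat.forall_lt_succ_left,
    List.take_zero, List.sum_nil, List.drop_zero, List.getD_cons_zero, List.take_succ_cons,
    List.getD_cons_succ, List.drop_drop, List.length_drop]
  constructor
  · rintro ⟨hl, hlen, ⟨hk, hblocks⟩, htail, hlast⟩
    exact ⟨hk, hl, by omega, hblocks, htail, hlast⟩
  · rintro ⟨hk, hl, hlen, hblocks, htail, hlast⟩
    exact ⟨hl, by omega, ⟨hk, hblocks⟩, htail, hlast⟩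

theorem exists_decomp (hβ : 0 < β) {w : List ℕ} (hw : Adm β w) (hne : 0 < w.length) :
    ∃ p, Decomp β w p := by
  induction hlen : w.length using Nat.strong_induction_on generalizing w with
  | _ n ih =>
    by_cases hagree : AgreesUpTo β w (w.length - 1)
    · exact ⟨([], w.length), decomp_nil_iff.mpr
        ⟨hne, rfl, hagree, hw.getD_le_of_agreesUpTo hβ (by omega) hagree⟩⟩
    · obtain ⟨k, hk, hblock⟩ := hw.exists_isBlock_of_not_agreesUpTo hβ (by omega) hagree
      obtain ⟨⟨ks, l⟩, hd⟩ :=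
        ih (w.length - k) (by have := hblock.1; omega) (hw.drop k) (by simp; omega) (by simp)
      exact ⟨(k :: ks, l), decomp_cons_iff.mpr ⟨hblock, hd⟩⟩

lemma not_decomp_nil_of_decomp_cons {w ks : List ℕ} {k l l' : ℕ} (h : Decomp β w ([], l))
    (h' : Decomp β w (k :: ks, l')) : False := by
  obtain ⟨-, rfl, hagree, -⟩ := decomp_nil_iff.mp h
  obtain ⟨hblock, hd⟩ := decomp_cons_iff.mp h'
  obtain ⟨hl', hlen, -⟩ := decomp_iff.mp hd
  have := hagree.lt_of_isBlock hblock
  simp only [List.length_drop] at hlen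
  omega

theorem decomp_unique {w ks ks' : List ℕ} {l l' : ℕ} (h : Decomp β w (ks, l))
    (h' : Decomp β w (ks', l')) : (ks, l) = (ks', l') := by
  induction ks generalizing w ks' with
  | nil =>
    cases ks' with
    | nil => rw [(decomp_nil_iff.mp h).2.1, (decomp_nil_iff.mp h').2.1]
    | cons k' ks' => exact (not_decomp_nil_of_decomp_cons h h').elim
  | cons k ks ih =>
    cases ks' with
    | nil => exact (not_decomp_nil_of_decomp_cons h' h).elim
    | cons k' ks' =>
      obtain ⟨hk, hd⟩ := decomp_cons_iff.mp h
      obtain ⟨hk', hd'⟩ := decomp_cons_iff.mp h'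
      obtain rfl := hk.unique hk'
      simpa using ih hd hd'

lemma Decomp.full_block (hβ : 0 < β) {w ks : List ℕ} {l : ℕ} (h : Decomp β w (ks, l)) {j : ℕ}
    (hj : j < ks.length) :
    Full β (List.ofFn (fun t : Fin (ks.getD j 0) => w.getD ((ks.take j).sum + t) 0)) := by
  apply full_of_isBlock hβ
  rw [List.length_ofFn]
  refine ((decomp_iff.mp h).2.2.1 j hj).of_getD_eq fun t ht => ?_
  rw [List.getD_drop, List.getD_eq_getElem _ 0 (by simpa using ht), List.getElem_ofFn]

lemma Decomp.le_of_finiteLen (hβ : 1 < β) {w ks : List ℕ} {l : ℕ} (hw : Adm β w)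
    (h : Decomp β w (ks, l)) {M : ℕ} (hM : FiniteLen β M) :
    (∀ k ∈ ks, k ≤ M) ∧ l ≤ M ∧ (l = M → w.getD (w.length - 1) 0 < dig β 1 (M - 1)) := by
  obtain ⟨hl, hlen, hblocks, hagree, hlast⟩ := decomp_iff.mp h
  have hnot := (hw.drop ks.sum).not_agreesUpTo_of_finiteLen hβ hM
  simp only [List.length_drop] at hnot
  refine ⟨fun k hk => ?_, ?_, fun hlM => ?_⟩
  · obtain ⟨j, hj, rfl⟩ := List.getElem_of_mem hk
    have := (hblocks j hj).le_of_finiteLen hM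
    rwa [List.getD_eq_getElem ks 0 hj] at this
  · by_contra! hMl
    exact hnot (by omega) fun t ht => hagree t (by omega)
  · subst hlM
    rw [show w.length - 1 = ks.sum + (l - 1) by omega, ← List.getD_drop]
    refine hlast.lt_of_ne fun heq => hnot (by omega) ?_
    rw [← Nat.sub_add_cancel hl]
    exact Nat.forall_lt_succ_right.mpr ⟨hagree, heq⟩

end Decomposition

/-- structure theorem — every admissible word has a unique canonical
decomposition; its blocks are full, and in the finite case the block lengths
are at most M, with strict final inequality when l = M. -/
theorem stmt9 (β : ℝ) (hβ : 1 < β) (w : List ℕ) (hw : Adm β w) (hne : 0 < w.length) :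
    (∃! p : List ℕ × ℕ, Decomp β w p) ∧
    (∀ ks l, Decomp β w (ks, l) →
      (∀ j, j < ks.length →
        Full β (List.ofFn (fun t : Fin (ks.getD j 0) => w.getD ((ks.take j).sum + t) 0))) ∧
      (∀ M, FiniteLen β M →
        (∀ k ∈ ks, k ≤ M) ∧ l ≤ M ∧
        (l = M → w.getD (w.length - 1) 0 < dig β 1 (M-1)))) := by
  have hβ0 : 0 < β := by linarith
  obtain ⟨⟨ks, l⟩, hd⟩ := exists_decomp hβ0 hw hne
  exact ⟨⟨_, hd, fun ⟨_, _⟩ hd' => decomp_unique hd' hd⟩,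
    fun _ _ h => ⟨fun _ hj => h.full_block hβ0 hj, fun _ hM => h.le_of_finiteLen hβ hw hM⟩⟩
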